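/- Let k be an algebraically closed field, A a k-algebra, and M a simple A-module with dim_k M strictly less than the cardinality of k. Then every A-module endomorphism of M is multiplication by a scalar in k; consequently any central element of A acts on M by a scalar. -/

import Mathlib

/-!
By Schur's lemma `End_A M` is a division algebra over `k`, and evaluation at a nonzero vector
embeds it `k`-linearly into `M`, so its dimension is `< #k`. An element `x` transcendental over
`k` in a division algebra `D` would lie in the commutative subfield of `D` formed by the double
centralizer of `x`, where the `#k` elements `(x - c)⁻¹` are `k`-linearly independent; hence
`dim_k D ≥ #k`. So `End_A M` is algebraic, hence equal to `k` as `k` is algebraically closed.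
-/

universe u

namespace Subfield

variable {D : Type*} [DivisionRing D]

def centralizer (s : Set D) : Subfield D where
  toSubring := Subring.centralizer s
  inv_mem' _ := Set.inv_mem_centralizer₀

instance (x : D) : Field (centralizer (Set.centralizer {x})) where
  mul_comm a b := Subtype.ext <|
    Set.centralizer_centralizer_comm_of_comm (by simp) _ a.2 _ b.2

end Subfield

open Subfield in
theorem Transcendental.cardinal_mk_le_rank {k D : Type u} [Field k] [DivisionRing D] [Algebra k D]
    {x : D} (hx : Transcendental k x) : Cardinal.mk k ≤ Module.rank k D := by
  set E := centralizer (Set.centralizer {x})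
  have hkE (c : k) : algebraMap k D c ∈ E := fun g _ => (Algebra.commutes c g).symm
  let _ : Algebra k E := ((algebraMap k D).codRestrict E hkE).toAlgebra
  let ι : E →ₐ[k] D := { E.subtype with commutes' := fun _ => rfl }
  have hxE : x ∈ E := fun g hg => (hg x rfl).symm
  have hxE' : Transcendental k (⟨x, hxE⟩ : E) := fun h => hx (h.algHom ι)
  calc Cardinal.mk k ≤ Module.rank k E := hxE'.linearIndependent_sub_inv.cardinal_le_rank
    _ ≤ Module.rank k D := LinearMap.rank_le_of_injective ι.toLinearMap Subtype.val_injective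

theorem algebraMap_surjective_of_rank_lt_cardinal_mk {k D : Type u} [Field k] [IsAlgClosed k]
    [DivisionRing D] [Algebra k D] (h : Module.rank k D < Cardinal.mk k) :
    Function.Surjective (algebraMap k D) :=
  have : Algebra.IsIntegral k D :=
    ⟨fun _ => (not_not.1 fun hx => (Transcendental.cardinal_mk_le_rank hx).not_gt h).isIntegral⟩
  IsAlgClosed.algebraMap_bijective_of_isIntegral.2

theorem IsSimpleModule.rank_end_le {k A M : Type*} [Field k] [Ring A] [Algebra k A]
    [AddCommGroup M] [Module k M] [Module A M] [IsScalarTower k A M] [IsSimpleModule A M] :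
    Module.rank k (Module.End A M) ≤ Module.rank k M := by
  have := IsSimpleModule.nontrivial A M
  obtain ⟨m, hm⟩ := exists_ne (0 : M)
  refine LinearMap.rank_le_of_injective
    (LinearMap.applyₗ m ∘ₗ LinearMap.restrictScalarsₗ k A M M k) fun f g hfg => ?_
  exact LinearMap.ext_on (IsSimpleModule.span_singleton_eq_top A hm) (by simpa using hfg)

def Module.End.smulOfCommute {A M : Type*} [Ring A] [AddCommGroup M] [Module A M] (z : A)
    (hz : ∀ a : A, z * a = a * z) : Module.End A M where
  toFun m := z • m
  map_add' := smul_add z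
  map_smul' a m := by rw [RingHom.id_apply, smul_smul, hz, mul_smul]

/-- Dixmier–Quillen Schur lemma: if `k` is algebraically closed, `A` a `k`-algebra, and `M`
a simple `A`-module with `dim_k M < |k|`, then every `A`-module endomorphism of `M` is
multiplication by a scalar in `k`; consequently any central element of `A` acts on `M` by
a scalar. -/
theorem stmt18 (k : Type u) [Field k] [IsAlgClosed k] (A : Type*) [Ring A] [Algebra k A]
    (M : Type u) [AddCommGroup M] [Module k M] [Module A M] [IsScalarTower k A M]
    [IsSimpleModule A M] (hdim : Module.rank k M < Cardinal.mk k) :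
    (∀ f : M →ₗ[A] M, ∃ c : k, ∀ m : M, f m = c • m) ∧
    (∀ z : A, (∀ a : A, z * a = a * z) → ∃ c : k, ∀ m : M, z • m = c • m) := by
  classical
  have hsurj : Function.Surjective (algebraMap k (Module.End A M)) :=
    algebraMap_surjective_of_rank_lt_cardinal_mk (IsSimpleModule.rank_end_le.trans_lt hdim)
  have scalar (f : M →ₗ[A] M) : ∃ c : k, ∀ m : M, f m = c • m := by
    obtain ⟨c, rfl⟩ := hsurj f
    exact ⟨c, fun m => rfl⟩
  exact ⟨scalar, fun z hz => scalar (Module.End.smulOfCommute z hz)⟩
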